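/- Let 0 ≤ e < 1, define k(f) = 1 + e·cos f, let J : ℝ → ℝ be differentiable with J'(f) = 1/k(f)², and set φ₁(f) = k(f)·sin f and φ₂(f) = 3e²·k(f)·J(f)·sin f + k(f)·cos f − 2e. Then for all f ∈ ℝ, the Wronskian satisfies φ₁'(f)·φ₂(f) − φ₁(f)·φ₂'(f) = 1 − e². -/

import Mathlib

/-!
Write `φ₁ = k sin` and `φ₂ = 3e² J φ₁ + ψ` with `ψ = k cos − 2e`. The Wronskian is bilinear and
`W(φ₁, g φ₁) = −g' φ₁²`, so `W(φ₁, φ₂) = W(φ₁, ψ) − 3e² J' k² sin² = W(φ₁, ψ) − 3e² sin²`, and a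
direct computation gives `W(φ₁, ψ) = 1 − e² cos² + 2e² sin²`.
-/

open Real

noncomputable def wronskian (u v : ℝ → ℝ) (x : ℝ) : ℝ := deriv u x * v x - u x * deriv v x

theorem wronskian_mul_self_add {u g w : ℝ → ℝ} {x : ℝ} (hu : DifferentiableAt ℝ u x)
    (hg : DifferentiableAt ℝ g x) (hw : DifferentiableAt ℝ w x) :
    wronskian u (fun y => g y * u y + w y) x = wronskian u w x - deriv g x * u x ^ 2 := by
  unfold wronskian
  rw [((hg.hasDerivAt.fun_mul hu.hasDerivAt).fun_add hw.hasDerivAt).deriv]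
  ring

theorem one_add_mul_cos_pos {e : ℝ} (he : |e| < 1) (x : ℝ) : 0 < 1 + e * cos x := by
  have h : |e * cos x| < 1 := by
    rw [abs_mul]
    exact lt_of_le_of_lt (mul_le_of_le_one_right (abs_nonneg e) (abs_cos_le_one x)) he
  linarith [neg_abs_le (e * cos x)]

theorem hasDerivAt_one_add_mul_cos (e x : ℝ) :
    HasDerivAt (fun y => 1 + e * cos y) (-(e * sin x)) x := by
  simpa using ((hasDerivAt_cos x).const_mul e).const_add 1

theorem wronskian_mul_sin_mul_cos_sub (e x : ℝ) :
    wronskian (fun y => (1 + e * cos y) * sin y) (fun y => (1 + e * cos y) * cos y - 2 * e) x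
      = 1 - e ^ 2 * cos x ^ 2 + 2 * e ^ 2 * sin x ^ 2 := by
  have hk := hasDerivAt_one_add_mul_cos e x
  rw [wronskian, (hk.fun_mul (hasDerivAt_sin x)).deriv,
    ((hk.fun_mul (hasDerivAt_cos x)).sub_const (2 * e)).deriv]
  linear_combination (1 + e * cos x) ^ 2 * sin_sq_add_cos_sq x

/-- The Wronskian of the two Yamanaka–Ankersen fundamental solutions
`φ₁ = k·sin f` and `φ₂ = 3e²·k·J·sin f + k·cos f − 2e` (with `k = 1 + e·cos f`
and `J' = 1/k²`) satisfies `φ₁'·φ₂ − φ₁·φ₂' = 1 − e²`. -/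
theorem stmt_5 (e : ℝ) (he0 : 0 ≤ e) (he1 : e < 1)
    (k : ℝ → ℝ) (hk : ∀ f, k f = 1 + e * Real.cos f)
    (J : ℝ → ℝ) (hJ : Differentiable ℝ J) (hJ' : ∀ f, deriv J f = 1 / (k f) ^ 2)
    (φ₁ φ₂ : ℝ → ℝ) (hφ₁ : ∀ f, φ₁ f = k f * Real.sin f)
    (hφ₂ : ∀ f, φ₂ f = 3 * e ^ 2 * k f * J f * Real.sin f + k f * Real.cos f - 2 * e) :
    ∀ f, deriv φ₁ f * φ₂ f - φ₁ f * deriv φ₂ f = 1 - e ^ 2 := by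
  intro f
  obtain rfl : k = fun y => 1 + e * cos y := funext hk
  obtain rfl : φ₁ = fun y => (1 + e * cos y) * sin y := funext hφ₁
  have hφ₂_split : φ₂ = fun y => 3 * e ^ 2 * J y * ((1 + e * cos y) * sin y)
      + ((1 + e * cos y) * cos y - 2 * e) := funext fun y => by rw [hφ₂]; ring
  have hk0 : 1 + e * cos f ≠ 0 := (one_add_mul_cos_pos (abs_lt.2 ⟨by linarith, he1⟩) f).ne'
  change wronskian _ φ₂ f = _
  rw [hφ₂_split, wronskian_mul_self_add (by fun_prop) ((hJ f).const_mul _) (by fun_prop),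
    wronskian_mul_sin_mul_cos_sub, deriv_const_mul _ (hJ f), hJ']
  field_simp
  linear_combination (-e ^ 2) * sin_sq_add_cos_sq f
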